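/- Let A and B be locally C*-algebras, V a full Hilbert A-module, W a full Hilbert B-module, E a Hilbert B-module, Ψ : A → L_B(E) a non-degenerate continuous *-morphism, and Φ : W → B(H,K) a non-degenerate representation of W with associated representation φ : B → B(H). Then for each v ∈ V, the map x ⊗ h ↦ v ⊗ x ⊗ h from E ⊗_alg H to the Hilbert space _{V⊗_Ψ E}H extends to a bounded linear operator _E^V Φ(v) : _EH → _{V⊗_Ψ E}H satisfying the norm estimate ‖_E^V Φ(v)(x⊗h)‖² ≤ q̃(Ψ(⟨v,v⟩)) ‖x ⊗ h‖², where q ∈ S(B) satisfies ‖φ(b)‖ ≤ q(b) for all b ∈ B. -/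

import Mathlib

noncomputable section

private lemma aux_iter_bound {EH : Type*} [NormedAddCommGroup EH] [InnerProductSpace ℂ EH]
    (ζ : ℕ → EH) (K C : ℝ) (hC0 : 0 ≤ C) (hK0 : 0 ≤ K)
    (hinner : ∀ m n : ℕ, (inner ℂ (ζ m) (ζ n) : ℂ) = inner ℂ (ζ 0) (ζ (m + n)))
    (hnrm : ∀ n : ℕ, ‖ζ n‖ ≤ C ^ n * K) :
    ‖ζ 1‖ ≤ C * ‖ζ 0‖ := by
  set Z := ‖ζ 0‖ with hZ
  have hZ0 : 0 ≤ Z := norm_nonneg _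
  have hsq : ∀ n : ℕ, ‖ζ n‖ ^ 2 ≤ Z * ‖ζ (n + n)‖ := by
    intro n
    have h1 : ‖ζ n‖ ^ 2 = ‖(inner ℂ (ζ n) (ζ n) : ℂ)‖ := by
      rw [inner_self_eq_norm_sq_to_K, norm_pow]
      simp
    rw [h1, hinner n n]
    exact norm_inner_le_norm _ _
  have hmain : ∀ n : ℕ, ‖ζ 1‖ ^ (2 ^ n) ≤ Z ^ (2 ^ n - 1) * ‖ζ (2 ^ n)‖ := by
    intro n
    induction n with
    | zero => simpa using le_refl ‖ζ 1‖
    | succ n ih =>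
      have h2 : (1 : ℕ) ≤ 2 ^ n := Nat.one_le_two_pow
      have e2 : 2 ^ n + 2 ^ n = 2 ^ (n + 1) := by rw [pow_succ]; ring
      have e3 : 2 * (2 ^ n - 1) + 1 = 2 ^ (n + 1) - 1 := by
        rw [← e2]; omega
      calc ‖ζ 1‖ ^ 2 ^ (n + 1) = (‖ζ 1‖ ^ 2 ^ n) ^ 2 := by rw [← pow_mul, pow_succ]
        _ ≤ (Z ^ (2 ^ n - 1) * ‖ζ (2 ^ n)‖) ^ 2 :=
            pow_le_pow_left₀ (pow_nonneg (norm_nonneg _) _) ih 2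
        _ = Z ^ (2 * (2 ^ n - 1)) * ‖ζ (2 ^ n)‖ ^ 2 := by
            rw [mul_pow, ← pow_mul]; ring_nf
        _ ≤ Z ^ (2 * (2 ^ n - 1)) * (Z * ‖ζ (2 ^ n + 2 ^ n)‖) :=
            mul_le_mul_of_nonneg_left (hsq _) (pow_nonneg hZ0 _)
        _ = Z ^ (2 ^ (n + 1) - 1) * ‖ζ (2 ^ (n + 1))‖ := by
            rw [← mul_assoc, ← pow_succ, e3, e2]
  by_contra hlt
  push_neg at hlt
  have hCZ0 : 0 ≤ C * Z := mul_nonneg hC0 hZ0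
  have h1pos : 0 < ‖ζ 1‖ := lt_of_le_of_lt hCZ0 hlt
  have hZpos : 0 < Z := by
    rcases hZ0.lt_or_eq with h | h
    · exact h
    · exfalso
      have h2 := hsq 1
      rw [← h] at h2
      nlinarith [norm_nonneg (ζ (1 + 1))]
  have hCpos : 0 < C := by
    rcases hC0.lt_or_eq with h | h
    · exact h
    · exfalso
      have h2 := hnrm 1
      rw [← h] at h2
      nlinarith
  set r := ‖ζ 1‖ / (C * Z) with hr
  have hr1 : 1 < r := (one_lt_div (by positivity)).2 hlt
  obtain ⟨n, hn⟩ := pow_unbounded_of_one_lt (K / Z) hr1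
  have hle : r ^ n ≤ r ^ (2 ^ n) := pow_le_pow_right₀ hr1.le (Nat.lt_two_pow_self (n := n)).le
  have hb : ‖ζ 1‖ ^ (2 ^ n) ≤ (C * Z) ^ (2 ^ n) * (K / Z) := by
    have h2 : (1 : ℕ) ≤ 2 ^ n := Nat.one_le_two_pow
    have e4 : (2 ^ n - 1) + 1 = 2 ^ n := by omega
    calc ‖ζ 1‖ ^ 2 ^ n ≤ Z ^ (2 ^ n - 1) * ‖ζ (2 ^ n)‖ := hmain n
      _ ≤ Z ^ (2 ^ n - 1) * (C ^ (2 ^ n) * K) :=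
          mul_le_mul_of_nonneg_left (hnrm _) (pow_nonneg hZ0 _)
      _ = (C * Z) ^ (2 ^ n) * (K / Z) := by
          have hZe : Z ^ (2 ^ n - 1) = Z ^ (2 ^ n) / Z := by
            rw [eq_div_iff hZpos.ne', ← pow_succ, e4]
          rw [mul_pow, hZe]
          field_simp
  have hcon : r ^ (2 ^ n) ≤ K / Z := by
    rw [hr, div_pow, div_le_iff₀ (by positivity)]
    calc ‖ζ 1‖ ^ 2 ^ n ≤ (C * Z) ^ (2 ^ n) * (K / Z) := hb
      _ = K / Z * (C * Z) ^ 2 ^ n := by ring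
  exact absurd (lt_of_lt_of_le hn (hle.trans hcon)) (lt_irrefl _)

open scoped ComplexOrder RightActions
open ContinuousLinearMap (adjoint)

/-- A (continuous) C*-seminorm on a complex *-algebra: a seminorm which is
submultiplicative and satisfies the C*-identity. -/
structure CStarSeminormOn (A : Type*) [NonUnitalRing A] [StarRing A] [Module ℂ A] extends
    Seminorm ℂ A where
  mul_le' : ∀ a b : A, toSeminorm (a * b) ≤ toSeminorm a * toSeminorm b
  star_mul_self' : ∀ a : A, toSeminorm (star a * a) = toSeminorm a ^ 2

/-- The data of a (right) Hilbert module over a locally C*-algebra `A`: a right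
`A`-module with an `A`-valued inner product which is `A`-linear in the second variable,
hermitian, positive and definite. -/
structure HilbertModuleData (A : Type*) [NonUnitalRing A] [StarRing A] [Module ℂ A]
    [TopologicalSpace A] (E : Type*) [AddCommGroup E] [Module ℂ E] where
  smul : E → A → E
  inner : E → E → A
  add_smul' : ∀ x y a, smul (x + y) a = smul x a + smul y a
  smul_add' : ∀ x a b, smul x (a + b) = smul x a + smul x b
  smul_mul' : ∀ x a b, smul (smul x a) b = smul x (a * b)
  smul_complex : ∀ (c : ℂ) x a, smul (c • x) a = c • smul x a
  inner_add_right : ∀ x y z, inner x (y + z) = inner x y + inner x z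
  inner_smul_right : ∀ x y a, inner x (smul y a) = inner x y * a
  inner_smul_complex : ∀ (c : ℂ) x y, inner x (c • y) = c • inner x y
  star_inner : ∀ x y, star (inner x y) = inner y x
  inner_self_nonneg : ∀ x, inner x x ∈ closure {a : A | ∃ b, a = star b * b}
  inner_self_eq_zero : ∀ x, inner x x = 0 → x = 0

/-- The Hilbert C*-module class as it stood in the older Mathlib: a right module via
`SMul Aᵐᵒᵖ E`, with `⟪x, y <• a⟫ = ⟪x, y⟫ * a`. -/
class OldCStarModule (A E : Type*) [NonUnitalSemiring A] [StarRing A] [Module ℂ A]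
    [AddCommGroup E] [Module ℂ E] [PartialOrder A] [SMul Aᵐᵒᵖ E] [Norm A] [Norm E]
    extends Inner A E where
  inner_add_right {x} {y} {z} : inner x (y + z) = inner x y + inner x z
  inner_self_nonneg {x} : 0 ≤ inner x x
  inner_self {x} : inner x x = 0 ↔ x = 0
  inner_op_smul_right {a : A} {x y : E} : inner x (y <• a) = inner x y * a
  inner_smul_right_complex {z : ℂ} {x} {y} : inner x (z • y) = z • inner x y
  star_inner x y : star (inner x y) = inner y x
  norm_eq_sqrt_norm_inner_self x : ‖x‖ = √‖inner x x‖

/-- A C*-algebra bundled with a compatible partial order. -/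
structure BundledCStarAlg : Type 1 where
  carrier : Type
  [inst : NonUnitalCStarAlgebra carrier]
  [instOrder : PartialOrder carrier]
  [instSOR : StarOrderedRing carrier]

attribute [instance] BundledCStarAlg.inst BundledCStarAlg.instOrder BundledCStarAlg.instSOR

/-- A bundled Hilbert C*-module over a bundled C*-algebra. -/
structure BundledCStarModule (C : BundledCStarAlg) : Type 1 where
  carrier : Type
  [instGroup : NormedAddCommGroup carrier]
  [instModC : NormedSpace ℂ carrier]
  [instSMul : SMul C.carrierᵐᵒᵖ carrier]
  [instMod : OldCStarModule C.carrier carrier]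
  [instComplete : CompleteSpace carrier]

attribute [instance] BundledCStarModule.instGroup BundledCStarModule.instModC
  BundledCStarModule.instSMul BundledCStarModule.instMod BundledCStarModule.instComplete

/-- `π : A → C` realizes the C*-algebra `C` as the quotient `A_p = A/N_p` of `A` by the
kernel of the C*-seminorm `p`, with the norm induced by `p`. -/
structure IsQuotientHom {A : Type*} [NonUnitalRing A] [StarRing A] [Module ℂ A]
    (p : A → ℝ) (C : BundledCStarAlg) (π : A → C.carrier) : Prop where
  surj : Function.Surjective π
  map_add : ∀ a b, π (a + b) = π a + π b
  map_mul : ∀ a b, π (a * b) = π a * π b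
  map_smul : ∀ (c : ℂ) (a : A), π (c • a) = c • π a
  map_star : ∀ a, π (star a) = star (π a)
  norm_eq : ∀ a, ‖π a‖ = p a

/-- `σ : E → F` realizes the Hilbert C*-module `F` over `C` as the quotient
`E_p = E/N_p^E` of the Hilbert module `E`, compatibly with the quotient map `π : A → C`. -/
structure IsQuotientModuleMap {A : Type*} [NonUnitalRing A] [StarRing A] [Module ℂ A]
    [TopologicalSpace A] {E : Type*} [AddCommGroup E] [Module ℂ E]
    (M : HilbertModuleData A E) {C : BundledCStarAlg} (π : A → C.carrier)
    (F : BundledCStarModule C) (σ : E → F.carrier) : Prop where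
  surj : Function.Surjective σ
  map_add : ∀ x y, σ (x + y) = σ x + σ y
  map_smulC : ∀ (c : ℂ) x, σ (c • x) = c • σ x
  map_smul : ∀ x a, σ (M.smul x a) = σ x <• (π a)
  map_inner : ∀ x y, (inner C.carrier (σ x) (σ y) : C.carrier) = π (M.inner x y)

set_option maxHeartbeats 2000000 in
/-- Rieffel induction for Hilbert modules over locally C*-algebras: for each `v ∈ V`,
the map `x ⊗ h ↦ v ⊗ x ⊗ h` extends to a bounded operator `_E^V Φ(v) : _EH → _{V⊗_Ψ E}H`
satisfying `‖_E^V Φ(v)(x⊗h)‖² ≤ q̃(Ψ⟨v,v⟩)·‖x⊗h‖²`, where `q̃(Ψ a) = ‖(π_q)_*(Ψ a)‖` is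
computed on the quotient module `E_q` and `q` dominates `φ`. -/
theorem stmt_7
    -- `A` and `B` are locally C*-algebras:
    {A : Type*} [NonUnitalRing A] [StarRing A] [Module ℂ A]
    [UniformSpace A] [IsUniformAddGroup A] [T2Space A] [CompleteSpace A]
    {ιA : Type*} [Nonempty ιA] (SA : ιA → CStarSeminormOn A)
    (hA : WithSeminorms fun i => (SA i).toSeminorm)
    {B : Type*} [NonUnitalRing B] [StarRing B] [Module ℂ B]
    [UniformSpace B] [IsUniformAddGroup B] [T2Space B] [CompleteSpace B]
    {ιB : Type*} [Nonempty ιB] (SB : ιB → CStarSeminormOn B)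
    (hB : WithSeminorms fun i => (SB i).toSeminorm)
    -- `V` is a full Hilbert `A`-module and `W` is a full Hilbert `B`-module:
    {V : Type*} [AddCommGroup V] [Module ℂ V] (MV : HilbertModuleData A V)
    (hVfull : Dense ((Submodule.span ℂ
      (Set.range fun q : V × V => MV.inner q.1 q.2) : Submodule ℂ A) : Set A))
    {W : Type*} [AddCommGroup W] [Module ℂ W] (MW : HilbertModuleData B W)
    (hWfull : Dense ((Submodule.span ℂ
      (Set.range fun q : W × W => MW.inner q.1 q.2) : Submodule ℂ B) : Set B))
    -- `E` is a Hilbert `B`-module and `Ψ : A → L_B(E)` is a *-morphism: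
    {E : Type*} [AddCommGroup E] [Module ℂ E] [TopologicalSpace E]
    (ME : HilbertModuleData B E)
    (Ψ : A → E → E)
    (hΨ_addA : ∀ a a' x, Ψ (a + a') x = Ψ a x + Ψ a' x)
    (hΨ_addE : ∀ a x y, Ψ a (x + y) = Ψ a x + Ψ a y)
    (hΨ_smul : ∀ (c : ℂ) a x, Ψ (c • a) x = c • Ψ a x)
    (hΨ_mul : ∀ a a' x, Ψ (a * a') x = Ψ a (Ψ a' x))
    (hΨ_adj : ∀ a x y, ME.inner (Ψ a x) y = ME.inner x (Ψ (star a) y))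
    (hΨ_mod : ∀ a x b, Ψ a (ME.smul x b) = ME.smul (Ψ a x) b)
    -- `Ψ` is non-degenerate:
    (hΨ_nondeg : Dense ((Submodule.span ℂ
      (Set.range fun q : A × E => Ψ q.1 q.2) : Submodule ℂ E) : Set E))
    -- `Φ : W → B(H,K)` is a non-degenerate representation of `W` with associated
    -- representation `φ` of `B`:
    {H Ks : Type*}
    [NormedAddCommGroup H] [InnerProductSpace ℂ H] [CompleteSpace H]
    [NormedAddCommGroup Ks] [InnerProductSpace ℂ Ks] [CompleteSpace Ks]
    (φ : B → (H →L[ℂ] H))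
    (hφ_add : ∀ b b', φ (b + b') = φ b + φ b')
    (hφ_mul : ∀ b b', φ (b * b') = φ b ∘L φ b')
    (hφ_smul : ∀ (c : ℂ) b, φ (c • b) = c • φ b)
    (hφ_star : ∀ b, φ (star b) = adjoint (φ b))
    (Φ : W → (H →L[ℂ] Ks))
    (hΦ : ∀ x y : W, adjoint (Φ x) ∘L Φ y = φ (MW.inner x y))
    (hΦnd : Dense ((Submodule.span ℂ
      (Set.range fun q : W × H => Φ q.1 q.2) : Submodule ℂ Ks) : Set Ks))
    (hΦnd' : Dense ((Submodule.span ℂ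
      (Set.range fun q : W × Ks => adjoint (Φ q.1) q.2) : Submodule ℂ H) : Set H))
    -- the induced Hilbert space `_EH`, with `em x h = [x ⊗ h]`:
    {EH : Type*} [NormedAddCommGroup EH] [InnerProductSpace ℂ EH] [CompleteSpace EH]
    (em : E → H → EH)
    (hem_addE : ∀ x y h, em (x + y) h = em x h + em y h)
    (hem_addH : ∀ x h k, em x (h + k) = em x h + em x k)
    (hem_smul : ∀ (c : ℂ) x h, em x (c • h) = c • em x h)
    (hem_inner : ∀ (x y : E) (h k : H),
      (inner ℂ (em x h) (em y k) : ℂ) = (inner ℂ h (φ (ME.inner x y) k) : ℂ))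
    (hem_dense : Dense ((Submodule.span ℂ
      (Set.range fun q : E × H => em q.1 q.2) : Submodule ℂ EH) : Set EH))
    -- the induced Hilbert space `_{V⊗_Ψ E}H`, with `em2 v x h = [v ⊗ x ⊗ h]`:
    {VEH : Type*} [NormedAddCommGroup VEH] [InnerProductSpace ℂ VEH] [CompleteSpace VEH]
    (em2 : V → E → H → VEH)
    (hem2_addV : ∀ v v' x h, em2 (v + v') x h = em2 v x h + em2 v' x h)
    (hem2_addE : ∀ v x y h, em2 v (x + y) h = em2 v x h + em2 v y h)
    (hem2_addH : ∀ v x h k, em2 v x (h + k) = em2 v x h + em2 v x k)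
    (hem2_smul : ∀ (c : ℂ) v x h, em2 v x (c • h) = c • em2 v x h)
    (hem2_inner : ∀ (v v' : V) (x x' : E) (h k : H),
      (inner ℂ (em2 v x h) (em2 v' x' k) : ℂ) =
        (inner ℂ h (φ (ME.inner x (Ψ (MV.inner v v') x')) k) : ℂ))
    (hem2_dense : Dense ((Submodule.span ℂ
      (Set.range fun q : V × E × H => em2 q.1 q.2.1 q.2.2) : Submodule ℂ VEH) : Set VEH))
    -- `q ∈ S(B)` dominates `φ`:
    (q : CStarSeminormOn B) (hq : Continuous fun b => q.toSeminorm b)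
    (hnorm : ∀ b : B, ‖φ b‖ ≤ q.toSeminorm b)
    -- the quotient data at `q`, and `(π_q)_*(Ψ a)` as an operator `Tq a` on `E_q`:
    (Cq : BundledCStarAlg) (πq : B → Cq.carrier)
    (hπq : IsQuotientHom (fun b => q.toSeminorm b) Cq πq)
    (Eq' : BundledCStarModule Cq) (σq : E → Eq'.carrier)
    (hσq : IsQuotientModuleMap ME πq Eq' σq)
    (Tq : A → (Eq'.carrier →L[ℂ] Eq'.carrier))
    (hTq : ∀ (a : A) (x : E), Tq a (σq x) = σq (Ψ a x)) :
    ∀ v : V, ∃ L : EH →L[ℂ] VEH,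
      (∀ (x : E) (h : H), L (em x h) = em2 v x h) ∧
      (∀ (x : E) (h : H),
        ‖em2 v x h‖ ^ 2 ≤ ‖Tq (MV.inner v v)‖ * ‖em x h‖ ^ 2) := by

  classical
  intro v
  set a := MV.inner v v with ha_def
  have ha_star : star a = a := MV.star_inner v v
  set C := ‖Tq a‖ with hC_def
  have hC0 : (0 : ℝ) ≤ C := norm_nonneg _
  -- norm bound for `em` in terms of the quotient module norm
  have em_norm : ∀ (y : E) (k : H), ‖em y k‖ ≤ ‖σq y‖ * ‖k‖ := by
    intro y k
    have h1 : ‖em y k‖ ^ 2 = ‖(inner ℂ (em y k) (em y k) : ℂ)‖ := by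
      rw [inner_self_eq_norm_sq_to_K, norm_pow]; simp
    have h2 : ‖em y k‖ ^ 2 ≤ (‖σq y‖ * ‖k‖) ^ 2 := by
      rw [h1, hem_inner y y k k]
      calc ‖(inner ℂ k (φ (ME.inner y y) k) : ℂ)‖ ≤ ‖k‖ * ‖φ (ME.inner y y) k‖ :=
            norm_inner_le_norm _ _
        _ ≤ ‖k‖ * (‖φ (ME.inner y y)‖ * ‖k‖) := by
            apply mul_le_mul_of_nonneg_left (ContinuousLinearMap.le_opNorm _ _) (norm_nonneg _)
        _ ≤ ‖k‖ * (q.toSeminorm (ME.inner y y) * ‖k‖) := by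
            apply mul_le_mul_of_nonneg_left _ (norm_nonneg _)
            exact mul_le_mul_of_nonneg_right (hnorm _) (norm_nonneg _)
        _ = (‖σq y‖ * ‖k‖) ^ 2 := by
            have hs : ‖σq y‖ ^ 2 = ‖(inner Cq.carrier (σq y) (σq y) : Cq.carrier)‖ := by
              rw [OldCStarModule.norm_eq_sqrt_norm_inner_self (A := Cq.carrier) (σq y), Real.sq_sqrt (norm_nonneg _)]
            rw [← hπq.norm_eq, ← hσq.map_inner, ← hs]; ring
    have := mul_nonneg (norm_nonneg (σq y)) (norm_nonneg k)
    nlinarith [norm_nonneg (em y k)]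
  -- iterates of `Ψ a`
  have iter_adj : ∀ (n : ℕ) (x y : E),
      ME.inner ((Ψ a)^[n] x) y = ME.inner x ((Ψ a)^[n] y) := by
    intro n
    induction n with
    | zero => intro x y; simp
    | succ n ih =>
      intro x y
      rw [Function.iterate_succ_apply', hΨ_adj, ha_star, ih, ← Function.iterate_succ_apply]
  have iter_norm : ∀ (n : ℕ) (y : E), ‖σq ((Ψ a)^[n] y)‖ ≤ C ^ n * ‖σq y‖ := by
    intro n
    induction n with
    | zero => intro y; simp
    | succ n ih =>
      intro y
      rw [Function.iterate_succ_apply', ← hTq]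
      calc ‖Tq a (σq ((Ψ a)^[n] y))‖ ≤ C * ‖σq ((Ψ a)^[n] y)‖ :=
            ContinuousLinearMap.le_opNorm _ _
        _ ≤ C * (C ^ n * ‖σq y‖) := mul_le_mul_of_nonneg_left (ih y) hC0
        _ = C ^ (n + 1) * ‖σq y‖ := by ring
  -- the key uniform estimate for finite families
  have key : ∀ (s : Finset (E × H)) (xx : E × H → E) (hh : E × H → H),
      ‖∑ i ∈ s, em2 v (xx i) (hh i)‖ ^ 2 ≤ C * ‖∑ i ∈ s, em (xx i) (hh i)‖ ^ 2 := by
    intro s xx hh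
    set ζ : ℕ → EH := fun n => ∑ i ∈ s, em ((Ψ a)^[n] (xx i)) (hh i) with hζ
    have hζ0 : ζ 0 = ∑ i ∈ s, em (xx i) (hh i) := by simp [hζ]
    set K := ∑ i ∈ s, ‖σq (xx i)‖ * ‖hh i‖ with hK
    have hK0 : (0 : ℝ) ≤ K :=
      Finset.sum_nonneg fun i _ => mul_nonneg (norm_nonneg _) (norm_nonneg _)
    have hinner : ∀ m n : ℕ, (inner ℂ (ζ m) (ζ n) : ℂ) = inner ℂ (ζ 0) (ζ (m + n)) := by
      intro m n
      rw [hζ]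
      simp only [sum_inner, inner_sum]
      refine Finset.sum_congr rfl fun i _ => Finset.sum_congr rfl fun j _ => ?_
      rw [hem_inner, hem_inner]
      congr 2
      rw [iter_adj, ← Function.iterate_add_apply]
      simp
    have hnrm : ∀ n : ℕ, ‖ζ n‖ ≤ C ^ n * K := by
      intro n
      calc ‖ζ n‖ ≤ ∑ i ∈ s, ‖em ((Ψ a)^[n] (xx i)) (hh i)‖ := norm_sum_le _ _
        _ ≤ ∑ i ∈ s, C ^ n * (‖σq (xx i)‖ * ‖hh i‖) := by
            refine Finset.sum_le_sum fun i _ => ?_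
            calc ‖em ((Ψ a)^[n] (xx i)) (hh i)‖ ≤ ‖σq ((Ψ a)^[n] (xx i))‖ * ‖hh i‖ :=
                  em_norm _ _
              _ ≤ C ^ n * ‖σq (xx i)‖ * ‖hh i‖ :=
                  mul_le_mul_of_nonneg_right (iter_norm n _) (norm_nonneg _)
              _ = C ^ n * (‖σq (xx i)‖ * ‖hh i‖) := by ring
        _ = C ^ n * K := by rw [hK, Finset.mul_sum]
    have hfin : ‖ζ 1‖ ≤ C * ‖ζ 0‖ := aux_iter_bound ζ K C hC0 hK0 hinner hnrm
    have hW : (inner ℂ (∑ i ∈ s, em2 v (xx i) (hh i)) (∑ i ∈ s, em2 v (xx i) (hh i)) : ℂ)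
        = inner ℂ (ζ 0) (ζ 1) := by
      rw [hζ]
      simp only [sum_inner, inner_sum]
      refine Finset.sum_congr rfl fun i _ => Finset.sum_congr rfl fun j _ => ?_
      rw [hem2_inner, hem_inner]
      simp [← ha_def]
    calc ‖∑ i ∈ s, em2 v (xx i) (hh i)‖ ^ 2
        = ‖(inner ℂ (∑ i ∈ s, em2 v (xx i) (hh i)) (∑ i ∈ s, em2 v (xx i) (hh i)) : ℂ)‖ := by
          rw [inner_self_eq_norm_sq_to_K, norm_pow]; simp
      _ = ‖(inner ℂ (ζ 0) (ζ 1) : ℂ)‖ := by rw [hW]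
      _ ≤ ‖ζ 0‖ * ‖ζ 1‖ := norm_inner_le_norm _ _
      _ ≤ ‖ζ 0‖ * (C * ‖ζ 0‖) := mul_le_mul_of_nonneg_left hfin (norm_nonneg _)
      _ = C * ‖∑ i ∈ s, em (xx i) (hh i)‖ ^ 2 := by rw [hζ0]; ring
  -- build the linear map on the span via `Finsupp.linearCombination`
  set v0 : E × H → EH := fun p => em p.1 p.2 with hv0
  set v2 : E × H → VEH := fun p => em2 v p.1 p.2 with hv2
  set T0 : ((E × H) →₀ ℂ) →ₗ[ℂ] EH := Finsupp.linearCombination ℂ v0 with hT0def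
  set T2 : ((E × H) →₀ ℂ) →ₗ[ℂ] VEH := Finsupp.linearCombination ℂ v2 with hT2def
  have hT0 : ∀ f : (E × H) →₀ ℂ, T0 f = ∑ p ∈ f.support, em p.1 (f p • p.2) := by
    intro f
    rw [hT0def, Finsupp.linearCombination_apply, Finsupp.sum]
    exact Finset.sum_congr rfl fun p _ => (hem_smul _ _ _).symm
  have hT2 : ∀ f : (E × H) →₀ ℂ, T2 f = ∑ p ∈ f.support, em2 v p.1 (f p • p.2) := by
    intro f
    rw [hT2def, Finsupp.linearCombination_apply, Finsupp.sum]
    exact Finset.sum_congr rfl fun p _ => (hem2_smul _ _ _ _).symm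
  have hbound : ∀ f : (E × H) →₀ ℂ, ‖T2 f‖ ^ 2 ≤ C * ‖T0 f‖ ^ 2 := by
    intro f
    rw [hT0, hT2]
    exact key f.support (fun p => p.1) (fun p => f p • p.2)
  have hker : LinearMap.ker T0 ≤ LinearMap.ker T2 := by
    intro f hf
    rw [LinearMap.mem_ker] at hf ⊢
    have h1 := hbound f
    rw [hf] at h1
    simp only [norm_zero] at h1
    have h2 : ‖T2 f‖ = 0 := by nlinarith [norm_nonneg (T2 f)]
    exact norm_eq_zero.mp h2
  set ℓ : LinearMap.range T0 →ₗ[ℂ] VEH :=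
    ((LinearMap.ker T0).liftQ T2 hker).comp
      (T0.quotKerEquivRange.symm : _ ≃ₗ[ℂ] _).toLinearMap with hℓdef
  have hℓ : ∀ (f : (E × H) →₀ ℂ) (hf : T0 f ∈ LinearMap.range T0),
      ℓ ⟨T0 f, hf⟩ = T2 f := by
    intro f hf
    rw [hℓdef]
    simp [LinearMap.quotKerEquivRange_symm_apply_image]
  have hℓ_bound : ∀ ξ : LinearMap.range T0, ‖ℓ ξ‖ ≤ Real.sqrt C * ‖ξ‖ := by
    rintro ⟨ξ, f, rfl⟩
    rw [hℓ f (LinearMap.mem_range_self _ _)]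
    have hco : ‖(⟨T0 f, LinearMap.mem_range_self _ _⟩ : LinearMap.range T0)‖ = ‖T0 f‖ := rfl
    rw [hco]
    have h1 := hbound f
    have h2 : ‖T2 f‖ = Real.sqrt (‖T2 f‖ ^ 2) := by
      rw [Real.sqrt_sq (norm_nonneg _)]
    rw [h2]
    calc Real.sqrt (‖T2 f‖ ^ 2) ≤ Real.sqrt (C * ‖T0 f‖ ^ 2) := Real.sqrt_le_sqrt h1
      _ = Real.sqrt C * ‖T0 f‖ := by
          rw [Real.sqrt_mul hC0, Real.sqrt_sq (norm_nonneg _)]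
  set ℓc : LinearMap.range T0 →L[ℂ] VEH := ℓ.mkContinuous (Real.sqrt C) hℓ_bound with hℓc
  set e : LinearMap.range T0 →L[ℂ] EH := (LinearMap.range T0).subtypeL with he
  have h_dense : DenseRange e := by
    have h1 : Set.range e = ((LinearMap.range T0 : Submodule ℂ EH) : Set EH) :=
      Subtype.range_coe
    unfold DenseRange
    rw [h1]
    have h2 : LinearMap.range T0 =
        Submodule.span ℂ (Set.range fun q : E × H => em q.1 q.2) := by
      rw [hT0def, Finsupp.range_linearCombination]
    rw [h2]
    exact hem_dense
  have h_e : IsUniformInducing e := isometry_subtype_coe.isUniformInducing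
  refine ⟨ℓc.extend e, ?_, ?_⟩
  · intro x h
    have hmem : em x h ∈ LinearMap.range T0 :=
      ⟨Finsupp.single (x, h) 1, by simp [hT0def, hv0, Finsupp.linearCombination_single]⟩
    have h1 : em x h = e ⟨em x h, hmem⟩ := rfl
    rw [h1, ContinuousLinearMap.extend_eq (h_dense := h_dense) (h_e := h_e)]
    have h2 : (⟨em x h, hmem⟩ : LinearMap.range T0)
        = ⟨T0 (Finsupp.single (x, h) 1), LinearMap.mem_range_self _ _⟩ := by
      apply Subtype.ext
      simp [hT0def, hv0, Finsupp.linearCombination_single]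
    show ℓ ⟨em x h, hmem⟩ = em2 v x h
    rw [h2, hℓ]
    simp [hT2def, hv2, Finsupp.linearCombination_single]
  · intro x h
    have h1 := key {((x, h) : E × H)} (fun p => p.1) (fun p => p.2)
    simpa using h1
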